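/- Let M be a monoid, A a countable type, and suppose lgcd : (List A → Option M) → M and red : (List A → Option M) → (List A → Option M) satisfy conditions (a) and (b) with index set List A. Let (S, init, t, step) be an M-transducer over A, let L w = t†(init ⊙† w) be the language it recognizes, and for s : S let L_s : List A → Option M be defined by L_s w = t†(some (1, s) ⊙† w). Let Irr be the image of red on nontrivial functions, and define the final transducer F = (Irr, init_F, t_F, step_F) by: init_F = some (lgcd L, red L) if L is nontrivial and none otherwise; t_F Λ = Λ []; step_F a Λ = some (lgcd (a⁻¹Λ), red (a⁻¹Λ)) if a⁻¹Λ is nontrivial and none otherwise, where (a⁻¹Λ) w = Λ (a :: w). Then the function f : S → Option (M × Irr) defined by f s = some (lgcd L_s, red L_s) if L_s is nontrivial and f s = none otherwise is a transducer morphism from (S, init, t, step) to F, and it is the unique such transducer morphism. -/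

import Mathlib

/-- Kleisli extension of `f : X → Option (M × Y)` to `Option (M × X)`. -/
def klExt {M X Y : Type} [Monoid M] (f : X → Option (M × Y)) :
    Option (M × X) → Option (M × Y) :=
  fun c => c.bind fun p => (f p.2).map fun q => (p.1 * q.1, q.2)

/-- Run a transducer's transition function along a word, from configuration `c`. -/
def runWord {M A S : Type} [Monoid M] (step : A → S → Option (M × S))
    (c : Option (M × S)) (w : List A) : Option (M × S) :=
  w.foldl (fun c a => klExt (step a) c) c

/-- Kleisli extension of the termination function `t : S → Option M`
(identifying `Option M` with `Option (M × PUnit)`). -/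
def outExt {M S : Type} [Monoid M] (t : S → Option M) :
    Option (M × S) → Option M :=
  fun c => c.bind fun p => (t p.2).map (p.1 * ·)

/-- The transducer `(S, init, t, step)` recognizes the language `L`. -/
def Recognizes {M A S : Type} [Monoid M] (init : Option (M × S))
    (t : S → Option M) (step : A → S → Option (M × S))
    (L : List A → Option M) : Prop :=
  ∀ w : List A, L w = outExt t (runWord step init w)

/-- `f` is a transducer morphism from `(S₁, init₁, t₁, step₁)` to
`(S₂, init₂, t₂, step₂)`. -/
def IsTransducerHom {M A S₁ S₂ : Type} [Monoid M]
    (init₁ : Option (M × S₁)) (t₁ : S₁ → Option M)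
    (step₁ : A → S₁ → Option (M × S₁))
    (init₂ : Option (M × S₂)) (t₂ : S₂ → Option M)
    (step₂ : A → S₂ → Option (M × S₂))
    (f : S₁ → Option (M × S₂)) : Prop :=
  klExt f init₁ = init₂ ∧
  (∀ s : S₁, t₁ s = outExt t₂ (f s)) ∧
  (∀ (a : A) (s : S₁), klExt f (step₁ a s) = klExt (step₂ a) (f s))

/-- `Λ : ι → Option M` is nontrivial if it is defined somewhere. -/
def NontrivialFn {M ι : Type} (Λ : ι → Option M) : Prop :=
  Λ ≠ fun _ => none

/-- `υ • Λ`, multiplying each defined value of `Λ` by `υ` on the left. -/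
def smulFn {M ι : Type} [Monoid M] (υ : M) (Λ : ι → Option M) : ι → Option M :=
  fun i => (Λ i).map (υ * ·)

/-- The functions `lgcd` and `red` satisfy conditions (a) and (b),
with index set `ι`. -/
def SatisfiesLgcdRed (M ι : Type) [Monoid M] (lgcd : (ι → Option M) → M)
    (red : (ι → Option M) → (ι → Option M)) : Prop :=
  (∀ Λ, NontrivialFn Λ → NontrivialFn (red Λ)) ∧
  (∀ Λ, NontrivialFn Λ → Λ = smulFn (lgcd Λ) (red Λ)) ∧
  (∀ Γ Λ, NontrivialFn Γ → NontrivialFn Λ → ∀ υ ν : M,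
    smulFn υ (red Γ) = smulFn ν (red Λ) → υ = ν ∧ red Γ = red Λ)

/-- The set of irreducible partial functions: the image of `red` on
nontrivial functions. -/
def Irr {M ι : Type} (red : (ι → Option M) → (ι → Option M)) : Type :=
  {Λ : ι → Option M // ∃ Γ : ι → Option M, NontrivialFn Γ ∧ red Γ = Λ}

open Classical in
/-- Initialization value and initial state of the final transducer. -/
noncomputable def finalInit {M A : Type} [Monoid M]
    (lgcd : (List A → Option M) → M)
    (red : (List A → Option M) → (List A → Option M))
    (L : List A → Option M) : Option (M × Irr red) :=
  if h : NontrivialFn L then some (lgcd L, ⟨red L, L, h, rfl⟩) else none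

/-- Termination function of the final transducer. -/
def finalT {M A : Type} (red : (List A → Option M) → (List A → Option M)) :
    Irr red → Option M :=
  fun Λ => Λ.1 []

open Classical in
/-- Transition function of the final transducer. -/
noncomputable def finalStep {M A : Type} [Monoid M]
    (lgcd : (List A → Option M) → M)
    (red : (List A → Option M) → (List A → Option M))
    (a : A) (Λ : Irr red) : Option (M × Irr red) :=
  if h : NontrivialFn (fun w => Λ.1 (a :: w)) then
    some (lgcd (fun w => Λ.1 (a :: w)),
      ⟨red (fun w => Λ.1 (a :: w)), fun w => Λ.1 (a :: w), h, rfl⟩)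
  else none

open Classical in
/-- The canonical morphism into the final transducer, sending a state `s`
to the reduction of the language `L_s` it recognizes. -/
noncomputable def canonHom {M A S : Type} [Monoid M]
    (lgcd : (List A → Option M) → M)
    (red : (List A → Option M) → (List A → Option M))
    (t : S → Option M) (step : A → S → Option (M × S)) :
    S → Option (M × Irr red) :=
  fun s =>
    if h : NontrivialFn (fun w => outExt t (runWord step (some (1, s)) w)) then
      some (lgcd (fun w => outExt t (runWord step (some (1, s)) w)),
        ⟨red (fun w => outExt t (runWord step (some (1, s)) w)),
          fun w => outExt t (runWord step (some (1, s)) w), h, rfl⟩)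
    else none

/-!
Write `finalInit Λ` for the normal form `(lgcd Λ, red Λ)` of a nontrivial `Λ`. Conditions (a)
and (b) say exactly that normal forms commute with scaling,
`finalInit (υ • Λ) = υ • finalInit Λ`, and that an irreducible `Λ` is the normal form of itself.
Hence the state `Λ` of the final transducer recognizes `Λ`, and every configuration of the final
transducer is the normal form of the language it recognizes. The canonical morphism sends a
configuration to the normal form of its language; since every morphism preserves recognized
languages, every morphism is the canonical one.
-/

section Transducer

variable {M A S X Y : Type} [Monoid M]

def configLang (t : S → Option M) (step : A → S → Option (M × S)) (c : Option (M × S)) :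
    List A → Option M :=
  fun w => outExt t (runWord step c w)

/-- The left quotient `a⁻¹Λ`. -/
def leftQuot (a : A) (Λ : List A → Option M) : List A → Option M :=
  fun w => Λ (a :: w)

lemma klExt_one (f : X → Option (M × Y)) (x : X) : klExt f (some (1, x)) = f x := by
  cases h : f x <;> simp [klExt, h]

lemma klExt_map_mul (f : X → Option (M × Y)) (υ : M) (c : Option (M × X)) :
    klExt f (c.map fun p => (υ * p.1, p.2)) = (klExt f c).map fun p => (υ * p.1, p.2) := by
  rcases c with _ | ⟨ν, x⟩
  · rfl
  · cases h : f x <;> simp [klExt, h, mul_assoc]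

lemma outExt_map_mul (t : S → Option M) (υ : M) (c : Option (M × S)) :
    outExt t (c.map fun p => (υ * p.1, p.2)) = (outExt t c).map (υ * ·) := by
  rcases c with _ | ⟨ν, s⟩
  · rfl
  · cases h : t s <;> simp [outExt, h, mul_assoc]

lemma runWord_none (step : A → S → Option (M × S)) (w : List A) :
    runWord step none w = none := by
  induction w with
  | nil => rfl
  | cons a w ih => exact ih

lemma runWord_map_mul (step : A → S → Option (M × S)) (υ : M) (c : Option (M × S))
    (w : List A) :
    runWord step (c.map fun p => (υ * p.1, p.2)) w
      = (runWord step c w).map fun p => (υ * p.1, p.2) := by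
  induction w generalizing c with
  | nil => rfl
  | cons a w ih => exact (congrArg (runWord step · w) (klExt_map_mul _ υ c)).trans (ih _)

lemma configLang_none (t : S → Option M) (step : A → S → Option (M × S)) :
    configLang t step none = fun _ => none := by
  funext w
  simp only [configLang, runWord_none]
  rfl

lemma configLang_some (t : S → Option M) (step : A → S → Option (M × S)) (υ : M) (s : S) :
    configLang t step (some (υ, s)) = smulFn υ (configLang t step (some (1, s))) := by
  funext w
  have hυ : (some (υ, s) : Option (M × S)) = (some (1, s)).map fun p => (υ * p.1, p.2) := by
    simp
  rw [configLang, hυ, runWord_map_mul, outExt_map_mul]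
  rfl

lemma configLang_step (t : S → Option M) (step : A → S → Option (M × S)) (a : A) (s : S) :
    configLang t step (step a s) = leftQuot a (configLang t step (some (1, s))) := by
  funext w
  simp only [configLang, leftQuot, runWord, List.foldl_cons, klExt_one]

lemma configLang_klExt_of_hom {S₁ S₂ : Type} {t₁ : S₁ → Option M}
    {step₁ : A → S₁ → Option (M × S₁)} {t₂ : S₂ → Option M}
    {step₂ : A → S₂ → Option (M × S₂)} {f : S₁ → Option (M × S₂)}
    (ht : ∀ s, t₁ s = outExt t₂ (f s))
    (hstep : ∀ a s, klExt f (step₁ a s) = klExt (step₂ a) (f s)) (c : Option (M × S₁)) :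
    configLang t₁ step₁ c = configLang t₂ step₂ (klExt f c) := by
  funext w
  induction w generalizing c with
  | nil =>
    rcases c with _ | ⟨υ, s⟩
    · rfl
    · change outExt t₁ (some (υ, s)) = outExt t₂ ((f s).map fun q => (υ * q.1, q.2))
      rw [outExt_map_mul, ← ht]
      rfl
  | cons a w ih =>
    refine (ih _).trans (congrArg (fun c => outExt t₂ (runWord step₂ c w)) ?_)
    rcases c with _ | ⟨υ, s⟩
    · rfl
    · change klExt f ((step₁ a s).map _) = klExt (step₂ a) ((f s).map _)
      rw [klExt_map_mul, klExt_map_mul, hstep]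

end Transducer

section Scaling

variable {M ι : Type} [Monoid M]

lemma nontrivialFn_smulFn_iff (υ : M) (Λ : ι → Option M) :
    NontrivialFn (smulFn υ Λ) ↔ NontrivialFn Λ := by
  simp [NontrivialFn, Function.ne_iff, smulFn]

lemma smulFn_smulFn (υ ν : M) (Λ : ι → Option M) :
    smulFn υ (smulFn ν Λ) = smulFn (υ * ν) Λ := by
  funext i
  cases h : Λ i <;> simp [smulFn, h, mul_assoc]

end Scaling

section FinalTransducer

variable {M A : Type} [Monoid M] {lgcd : (List A → Option M) → M}
  {red : (List A → Option M) → (List A → Option M)}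

lemma finalInit_of_not_nontrivialFn {Λ : List A → Option M} (h : ¬NontrivialFn Λ) :
    finalInit lgcd red Λ = none :=
  dif_neg h

lemma finalInit_of_nontrivialFn {Λ : List A → Option M} (h : NontrivialFn Λ) :
    finalInit lgcd red Λ = some (lgcd Λ, ⟨red Λ, Λ, h, rfl⟩) :=
  dif_pos h

lemma finalInit_smulFn_irr (hlr : SatisfiesLgcdRed M (List A) lgcd red) (υ : M)
    (Λ : Irr red) : finalInit lgcd red (smulFn υ Λ.1) = some (υ, Λ) := by
  obtain ⟨_, Γ, hΓ, rfl⟩ := Λ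
  have hυΓ : NontrivialFn (smulFn υ (red Γ)) := (nontrivialFn_smulFn_iff υ _).2 (hlr.1 Γ hΓ)
  obtain ⟨hlgcd, hred⟩ := hlr.2.2 Γ _ hΓ hυΓ υ _ (hlr.2.1 _ hυΓ)
  rw [finalInit_of_nontrivialFn hυΓ]
  exact congrArg some (Prod.ext hlgcd.symm (Subtype.ext hred.symm))

lemma finalInit_smulFn (hlr : SatisfiesLgcdRed M (List A) lgcd red) (υ : M)
    (Λ : List A → Option M) :
    finalInit lgcd red (smulFn υ Λ) = (finalInit lgcd red Λ).map fun p => (υ * p.1, p.2) := by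
  by_cases hΛ : NontrivialFn Λ
  · have hsplit : smulFn υ Λ = smulFn (υ * lgcd Λ) (red Λ) := by
      rw [← smulFn_smulFn, ← hlr.2.1 Λ hΛ]
    rw [finalInit_of_nontrivialFn hΛ, hsplit, finalInit_smulFn_irr hlr _ ⟨red Λ, Λ, hΛ, rfl⟩]
    rfl
  · rw [finalInit_of_not_nontrivialFn hΛ, finalInit_of_not_nontrivialFn
      (mt (nontrivialFn_smulFn_iff υ Λ).1 hΛ)]
    rfl

lemma klExt_finalStep_finalInit (hlr : SatisfiesLgcdRed M (List A) lgcd red) (a : A)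
    (Λ : List A → Option M) :
    klExt (finalStep lgcd red a) (finalInit lgcd red Λ) = finalInit lgcd red (leftQuot a Λ) := by
  by_cases hΛ : NontrivialFn Λ
  · have hquot : leftQuot a Λ = smulFn (lgcd Λ) (leftQuot a (red Λ)) := by
      conv_lhs => rw [hlr.2.1 Λ hΛ]
      rfl
    rw [finalInit_of_nontrivialFn hΛ, hquot, finalInit_smulFn hlr]
    rfl
  · have hquot : ¬NontrivialFn (leftQuot a Λ) := fun h =>
      hΛ fun h' => h (funext fun w => congrFun h' (a :: w))
    rw [finalInit_of_not_nontrivialFn hΛ, finalInit_of_not_nontrivialFn hquot]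
    rfl

lemma configLang_finalInit (hlr : SatisfiesLgcdRed M (List A) lgcd red)
    (Λ : List A → Option M) :
    configLang (finalT red) (finalStep lgcd red) (finalInit lgcd red Λ) = Λ := by
  funext w
  induction w generalizing Λ with
  | nil =>
    by_cases hΛ : NontrivialFn Λ
    · rw [configLang, runWord, List.foldl_nil, finalInit_of_nontrivialFn hΛ,
        congrFun (hlr.2.1 Λ hΛ) []]
      rfl
    · rw [finalInit_of_not_nontrivialFn hΛ, not_not.1 hΛ]
      rfl
  | cons a w ih =>
    change configLang _ _ (klExt (finalStep lgcd red a) (finalInit lgcd red Λ)) w = _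
    rw [klExt_finalStep_finalInit hlr, ih]
    rfl

lemma finalInit_configLang (hlr : SatisfiesLgcdRed M (List A) lgcd red)
    (c : Option (M × Irr red)) :
    finalInit lgcd red (configLang (finalT red) (finalStep lgcd red) c) = c := by
  rcases c with _ | ⟨υ, Λ⟩
  · rw [configLang_none]
    exact finalInit_of_not_nontrivialFn (not_not.2 rfl)
  · rw [← finalInit_smulFn_irr hlr υ Λ, configLang_finalInit hlr]

variable {S : Type} {t : S → Option M} {step : A → S → Option (M × S)}

lemma canonHom_eq (s : S) :
    canonHom lgcd red t step s = finalInit lgcd red (configLang t step (some (1, s))) :=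
  rfl

lemma klExt_canonHom (hlr : SatisfiesLgcdRed M (List A) lgcd red) (c : Option (M × S)) :
    klExt (canonHom lgcd red t step) c = finalInit lgcd red (configLang t step c) := by
  rcases c with _ | ⟨υ, s⟩
  · rw [configLang_none]
    exact (finalInit_of_not_nontrivialFn (not_not.2 rfl)).symm
  · rw [configLang_some, finalInit_smulFn hlr]
    rfl

lemma isTransducerHom_canonHom (hlr : SatisfiesLgcdRed M (List A) lgcd red)
    (init : Option (M × S)) :
    IsTransducerHom init t step (finalInit lgcd red (configLang t step init))
      (finalT red) (finalStep lgcd red) (canonHom lgcd red t step) := by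
  refine ⟨klExt_canonHom hlr init, fun s => ?_, fun a s => ?_⟩
  · have hnil := congrFun (configLang_finalInit hlr (configLang t step (some (1, s)))) []
    rw [canonHom_eq]
    refine Eq.trans ?_ hnil.symm
    cases h : t s <;> simp [configLang, runWord, outExt, h]
  · rw [klExt_canonHom hlr, canonHom_eq, klExt_finalStep_finalInit hlr, configLang_step]

lemma eq_canonHom_of_isTransducerHom (hlr : SatisfiesLgcdRed M (List A) lgcd red)
    {init : Option (M × S)} {init' : Option (M × Irr red)} {g : S → Option (M × Irr red)}
    (hg : IsTransducerHom init t step init' (finalT red) (finalStep lgcd red) g) :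
    g = canonHom lgcd red t step := by
  funext s
  rw [canonHom_eq, configLang_klExt_of_hom hg.2.1 hg.2.2, klExt_one, finalInit_configLang hlr]

end FinalTransducer

theorem final_transducer_general (M A S : Type) [Monoid M]
    (lgcd : (List A → Option M) → M)
    (red : (List A → Option M) → (List A → Option M))
    (hlr : SatisfiesLgcdRed M (List A) lgcd red)
    (init : Option (M × S)) (t : S → Option M)
    (step : A → S → Option (M × S)) :
    IsTransducerHom init t step
      (finalInit lgcd red (fun w => outExt t (runWord step init w)))
      (finalT red) (finalStep lgcd red)
      (canonHom lgcd red t step) ∧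
    (∀ g : S → Option (M × Irr red),
      IsTransducerHom init t step
        (finalInit lgcd red (fun w => outExt t (runWord step init w)))
        (finalT red) (finalStep lgcd red) g →
      g = canonHom lgcd red t step) :=
  ⟨isTransducerHom_canonHom hlr init, fun _ hg => eq_canonHom_of_isTransducerHom hlr hg⟩

theorem final_transducer (M A S : Type) [Monoid M] [Countable A]
    (lgcd : (List A → Option M) → M)
    (red : (List A → Option M) → (List A → Option M))
    (hlr : SatisfiesLgcdRed M (List A) lgcd red)
    (init : Option (M × S)) (t : S → Option M)
    (step : A → S → Option (M × S)) :
    IsTransducerHom init t step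
      (finalInit lgcd red (fun w => outExt t (runWord step init w)))
      (finalT red) (finalStep lgcd red)
      (canonHom lgcd red t step) ∧
    (∀ g : S → Option (M × Irr red),
      IsTransducerHom init t step
        (finalInit lgcd red (fun w => outExt t (runWord step init w)))
        (finalT red) (finalStep lgcd red) g →
      g = canonHom lgcd red t step) :=
  final_transducer_general M A S lgcd red hlr init t step
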